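/- For every ε > 0 there exists a measurable function ζ : ℝ^d → ℝ^d taking only finitely many values such that g^A(x) < ε + f(x − ζ(x)) − ⟨ζ(x)σ^{-1}, ζ(x)⟩/(2√A) for all x ∈ ℝ^d. -/

import Mathlib

open MeasureTheory ProbabilityTheory Matrix Filter

noncomputable section

/-- Euclidean inner product on row vectors in `ℝ^d`. -/
def euclInner {d : ℕ} (x y : Fin d → ℝ) : ℝ := ∑ i, x i * y i

/-- Euclidean norm on row vectors in `ℝ^d`. -/
def euclNorm {d : ℕ} (x : Fin d → ℝ) : ℝ := Real.sqrt (∑ i, (x i) ^ 2)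

/-- `g^A(x) := sup_y [ f(x+y) − ⟨yσ⁻¹, y⟩/(2√A) ]`. -/
def gA {d : ℕ} (A : ℝ) (σ : Matrix (Fin d) (Fin d) ℝ) (f : (Fin d → ℝ) → ℝ)
    (x : Fin d → ℝ) : ℝ :=
  sSup {r | ∃ y : Fin d → ℝ, r = f (x + y) - euclInner (y ᵥ* σ⁻¹) y / (2 * Real.sqrt A)}

/-!
Because σ⁻¹ is positive definite, the penalty ⟨yσ⁻¹, y⟩/(2√A) grows quadratically while `f` grows
at most linearly, so shifts `y` outside a fixed ball never beat `y = 0`. On that compact ball the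
functions `y ↦ f(x + y) − ⟨yσ⁻¹, y⟩/(2√A)` are uniformly equicontinuous in `x`, hence a finite net
of the ball approximates the supremum to within `ε` uniformly in `x`. Picking at each `x` a best
point of the net, with ties broken by a fixed order, is a measurable selector with finitely many
values.
-/

theorem Finset.exists_measurable_apply_eq_sup' {α β : Type*} [MeasurableSpace α]
    [MeasurableSpace β] (φ : α → β → ℝ) {s : Finset β} (hs : s.Nonempty)
    (hφ : ∀ z ∈ s, Measurable (φ · z)) :
    ∃ ζ : α → β, Measurable ζ ∧ (∀ x, ζ x ∈ s) ∧ ∀ x, φ x (ζ x) = s.sup' hs (φ x) := by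
  induction hs using Finset.Nonempty.cons_induction with
  | singleton a => exact ⟨fun _ => a, measurable_const, by simp, by simp⟩
  | cons a s ha hs ih =>
    obtain ⟨ζ, hζ, hζs, hζsup⟩ := ih fun z hz => hφ z (mem_cons_of_mem hz)
    have hsup : Measurable fun x => φ x (ζ x) := by
      have : (fun x => φ x (ζ x)) = s.sup' hs fun z x => φ x z :=
        funext fun x => by rw [hζsup, Finset.sup'_apply]
      exact this ▸ Finset.measurable_sup' hs fun z hz => hφ z (mem_cons_of_mem hz)
    have hset : MeasurableSet {x | φ x (ζ x) ≤ φ x a} :=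
      measurableSet_le hsup (hφ a (mem_cons_self a s))
    refine ⟨fun x => if φ x (ζ x) ≤ φ x a then a else ζ x,
      Measurable.ite hset measurable_const hζ, fun x => ?_, fun x => ?_⟩
    · dsimp only
      split_ifs
      exacts [mem_cons_self a s, mem_cons_of_mem (hζs x)]
    · rw [sup'_cons hs, ← hζsup]
      dsimp only
      split_ifs with h
      · exact (sup_eq_left.mpr h).symm
      · exact (sup_eq_right.mpr (not_le.mp h).le).symm

theorem Metric.uniformEquicontinuousOn_iff {ι β α : Type*} [PseudoMetricSpace β]
    [PseudoMetricSpace α] {F : ι → β → α} {S : Set β} :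
    UniformEquicontinuousOn F S ↔
      ∀ ε > 0, ∃ δ > 0, ∀ x ∈ S, ∀ y ∈ S, dist x y < δ → ∀ i, dist (F i x) (F i y) < ε := by
  rw [(uniformity_basis_dist.inf_principal _).uniformEquicontinuousOn_iff uniformity_basis_dist]
  simp only [Set.mem_inter_iff, Set.mem_ofPred_eq, Set.mem_prod]
  grind

theorem UniformContinuous.uniformEquicontinuousOn_comp_sub_sub {E : Type*}
    [SeminormedAddCommGroup E] {f h : E → ℝ} (hf : UniformContinuous f) {K : Set E}
    (hh : UniformContinuousOn h K) :
    UniformEquicontinuousOn (fun x w => f (x - w) - h w) K := by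
  rw [Metric.uniformEquicontinuousOn_iff]
  intro ε hε
  obtain ⟨δ₁, hδ₁, hf⟩ := Metric.uniformContinuous_iff.mp hf (ε / 2) (half_pos hε)
  obtain ⟨δ₂, hδ₂, hh⟩ := Metric.uniformContinuousOn_iff.mp hh (ε / 2) (half_pos hε)
  refine ⟨min δ₁ δ₂, lt_min hδ₁ hδ₂, fun y hy z hz hyz x => ?_⟩
  calc dist (f (x - y) - h y) (f (x - z) - h z)
      ≤ dist (f (x - y)) (f (x - z)) + dist (h y) (h z) := dist_sub_sub_le _ _ _ _
    _ < ε / 2 + ε / 2 := by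
      gcongr
      · exact hf (by rw [dist_sub_left]; exact hyz.trans_le (min_le_left _ _))
      · exact hh y hy z hz (hyz.trans_le (min_le_right _ _))
    _ = ε := add_halves ε

theorem exists_measurable_finite_range_forall_lt_add {α E : Type*} [MeasurableSpace α]
    [PseudoMetricSpace E] [MeasurableSpace E] (F : α → E → ℝ) (hF : ∀ y, Measurable (F · y))
    {K : Set E} (hK : IsCompact K) (hFK : UniformEquicontinuousOn F K) {y₀ : E}
    (hfar : ∀ x, ∀ y ∉ K, F x y ≤ F x y₀) {ε : ℝ} (hε : 0 < ε) :
    ∃ ζ : α → E, Measurable ζ ∧ (Set.range ζ).Finite ∧ ∀ x y, F x y < F x (ζ x) + ε := by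
  classical
  obtain ⟨δ, hδ, hFδ⟩ := Metric.uniformEquicontinuousOn_iff.mp hFK ε hε
  obtain ⟨t, htK, ht, hcover⟩ := hK.finite_cover_balls hδ
  obtain ⟨ζ, hζ, hζs, hζmax⟩ := (insert y₀ ht.toFinset).exists_measurable_apply_eq_sup' F
    (Finset.insert_nonempty _ _) fun z _ => hF z
  have hle : ∀ x, ∀ z ∈ insert y₀ ht.toFinset, F x z ≤ F x (ζ x) := fun x z hz =>
    (hζmax x).symm ▸ Finset.le_sup' (F x) hz
  refine ⟨ζ, hζ, (insert y₀ ht.toFinset).finite_toSet.subset (Set.range_subset_iff.mpr hζs),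
    fun x y => ?_⟩
  by_cases hy : y ∈ K
  · obtain ⟨z, hzt, hyz⟩ := Set.mem_iUnion₂.mp (hcover hy)
    have hclose := (abs_lt.mp (hFδ y hy z (htK hzt) hyz x)).2
    have := hle x z (Finset.mem_insert_of_mem (ht.mem_toFinset.mpr hzt))
    linarith
  · linarith [hfar x y hy, hle x y₀ (Finset.mem_insert_self _ _)]

theorem exists_pos_mul_norm_sq_le {E : Type*} [NormedAddCommGroup E] [NormedSpace ℝ E]
    [FiniteDimensional ℝ E] {q : E → ℝ} (hq : Continuous q)
    (hsmul : ∀ (c : ℝ) y, q (c • y) = c ^ 2 * q y) (hpos : ∀ y ≠ 0, 0 < q y) :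
    ∃ m > 0, ∀ y, m * ‖y‖ ^ 2 ≤ q y := by
  have hq0 : q 0 = 0 := by simpa using hsmul 0 0
  rcases subsingleton_or_nontrivial E with hE | hE
  · exact ⟨1, one_pos, fun y => by simp [Subsingleton.elim y 0, hq0]⟩
  obtain ⟨y₀, hy₀, hmin⟩ := (isCompact_sphere (0 : E) 1).exists_isMinOn
    (NormedSpace.sphere_nonempty.mpr zero_le_one) hq.continuousOn
  have hy₀0 : y₀ ≠ 0 := ne_zero_of_mem_unit_sphere ⟨y₀, hy₀⟩
  refine ⟨q y₀, hpos y₀ hy₀0, fun y => ?_⟩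
  rcases eq_or_ne y 0 with rfl | hy
  · simp [hq0]
  have hunit : ‖y‖⁻¹ • y ∈ Metric.sphere (0 : E) 1 := by
    simp [norm_smul, hy]
  calc q y₀ * ‖y‖ ^ 2 ≤ q (‖y‖⁻¹ • y) * ‖y‖ ^ 2 := by gcongr; exact hmin hunit
    _ = q y := by
      rw [hsmul, inv_pow, mul_comm, ← mul_assoc, mul_inv_cancel₀ (by positivity), one_mul]

section Euclidean

variable {d : ℕ}

theorem euclNorm_eq_norm (x : Fin d → ℝ) :
    euclNorm x = ‖(WithLp.toLp 2 x : EuclideanSpace ℝ (Fin d))‖ := by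
  simp [euclNorm, EuclideanSpace.norm_eq]

theorem euclInner_eq_dotProduct (x y : Fin d → ℝ) : euclInner x y = x ⬝ᵥ y := rfl

theorem isCompact_setOf_euclNorm_le (R : ℝ) : IsCompact {x : Fin d → ℝ | euclNorm x ≤ R} := by
  have hK : {x : Fin d → ℝ | euclNorm x ≤ R} =
      (EuclideanSpace.equiv (Fin d) ℝ).symm.toHomeomorph ⁻¹' Metric.closedBall 0 R := by
    ext x; simp [euclNorm_eq_norm]
  rw [hK, Homeomorph.isCompact_preimage]
  exact isCompact_closedBall 0 R

theorem uniformContinuous_of_abs_sub_le_mul_euclNorm {f : (Fin d → ℝ) → ℝ} {L : ℝ}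
    (hf : ∀ x y, |f x - f y| ≤ L * euclNorm (x - y)) : UniformContinuous f := by
  have hlip : LipschitzWith (Real.toNNReal L) fun w : EuclideanSpace ℝ (Fin d) => f w.ofLp := by
    refine LipschitzWith.of_dist_le_mul fun v w => ?_
    calc dist (f v.ofLp) (f w.ofLp) ≤ L * euclNorm (v.ofLp - w.ofLp) := hf _ _
      _ ≤ Real.toNNReal L * dist v w := by
        rw [euclNorm_eq_norm, dist_eq_norm]
        exact mul_le_mul (Real.le_coe_toNNReal L) (by simp) (norm_nonneg _) (by positivity)
  exact hlip.uniformContinuous.comp (PiLp.uniformContinuous_toLp 2 _)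

section QuadraticForm

variable {M : Matrix (Fin d) (Fin d) ℝ}

theorem continuous_euclInner_vecMul_self (M : Matrix (Fin d) (Fin d) ℝ) :
    Continuous fun y : Fin d → ℝ => euclInner (y ᵥ* M) y := by
  unfold euclInner vecMul dotProduct; fun_prop

theorem euclInner_smul_vecMul_smul (M : Matrix (Fin d) (Fin d) ℝ) (c : ℝ) (y : Fin d → ℝ) :
    euclInner ((c • y) ᵥ* M) (c • y) = c ^ 2 * euclInner (y ᵥ* M) y := by
  simp only [euclInner_eq_dotProduct, smul_vecMul, smul_dotProduct, dotProduct_smul, smul_eq_mul]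
  ring

theorem euclInner_neg_vecMul_neg (M : Matrix (Fin d) (Fin d) ℝ) (y : Fin d → ℝ) :
    euclInner (-y ᵥ* M) (-y) = euclInner (y ᵥ* M) y := by
  simp [euclInner_eq_dotProduct, neg_vecMul]

theorem Matrix.PosDef.euclInner_vecMul_self_pos (hM : M.PosDef) {y : Fin d → ℝ} (hy : y ≠ 0) :
    0 < euclInner (y ᵥ* M) y := by
  simpa [euclInner_eq_dotProduct, dotProduct_mulVec] using hM.dotProduct_mulVec_pos hy

theorem Matrix.PosDef.exists_pos_mul_euclNorm_sq_le (hM : M.PosDef) :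
    ∃ m > 0, ∀ y, m * euclNorm y ^ 2 ≤ euclInner (y ᵥ* M) y := by
  obtain ⟨m, hm, h⟩ := exists_pos_mul_norm_sq_le (E := EuclideanSpace ℝ (Fin d))
    (q := fun w => euclInner (w.ofLp ᵥ* M) w.ofLp)
    ((continuous_euclInner_vecMul_self M).comp (PiLp.continuous_ofLp 2 _))
    (fun c w => by simpa using euclInner_smul_vecMul_smul M c w.ofLp)
    (fun w hw => hM.euclInner_vecMul_self_pos (by simpa using hw))
  exact ⟨m, hm, fun y => by simpa [euclNorm_eq_norm] using h (WithLp.toLp 2 y)⟩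

end QuadraticForm

-- The supremum defining `gA` is taken over `w = -y`, so that a maximiser is the `ζ x` of `stmt5`.
def gAObjective (A : ℝ) (σ : Matrix (Fin d) (Fin d) ℝ) (f : (Fin d → ℝ) → ℝ)
    (x w : Fin d → ℝ) : ℝ :=
  f (x - w) - euclInner (w ᵥ* σ⁻¹) w / (2 * Real.sqrt A)

variable {A : ℝ} {σ : Matrix (Fin d) (Fin d) ℝ} {f : (Fin d → ℝ) → ℝ}

theorem gA_eq_iSup_gAObjective (x : Fin d → ℝ) : gA A σ f x = ⨆ w, gAObjective A σ f x w := by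
  unfold gA iSup
  congr 1
  ext r
  constructor
  · rintro ⟨y, rfl⟩
    exact ⟨-y, by simp [gAObjective, euclInner_neg_vecMul_neg]⟩
  · rintro ⟨w, rfl⟩
    exact ⟨-w, by simp [gAObjective, euclInner_neg_vecMul_neg, sub_eq_add_neg]⟩

theorem measurable_gAObjective (hf : Continuous f) (w : Fin d → ℝ) :
    Measurable (gAObjective A σ f · w) :=
  (hf.comp (continuous_sub_right w)).measurable.sub_const _

theorem uniformEquicontinuousOn_gAObjective (hf : UniformContinuous f) {K : Set (Fin d → ℝ)}
    (hK : IsCompact K) : UniformEquicontinuousOn (gAObjective A σ f) K :=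
  hf.uniformEquicontinuousOn_comp_sub_sub <| hK.uniformContinuousOn_of_continuous <|
    ((continuous_euclInner_vecMul_self σ⁻¹).div_const _).continuousOn

theorem gAObjective_le_gAObjective_zero {L m : ℝ} (hf : ∀ x y, |f x - f y| ≤ L * euclNorm (x - y))
    (hq : ∀ y, m * euclNorm y ^ 2 ≤ euclInner (y ᵥ* σ⁻¹) y) (hA : 0 < A) (x : Fin d → ℝ)
    {w : Fin d → ℝ} (hw : 2 * Real.sqrt A * L ≤ m * euclNorm w) :
    gAObjective A σ f x w ≤ gAObjective A σ f x 0 := by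
  have hshift : f (x - w) ≤ f x + L * euclNorm w := by
    have := (abs_le.mp (hf (x - w) x)).2
    rw [sub_sub_cancel_left, euclNorm_eq_norm, WithLp.toLp_neg, norm_neg, ← euclNorm_eq_norm]
      at this
    linarith
  have hpenalty : L * euclNorm w ≤ euclInner (w ᵥ* σ⁻¹) w / (2 * Real.sqrt A) := by
    have he : 0 ≤ euclNorm w := by rw [euclNorm_eq_norm]; exact norm_nonneg _
    rw [le_div_iff₀ (by positivity)]
    nlinarith [hq w, mul_le_mul_of_nonneg_right hw he]
  have hzero : gAObjective A σ f x 0 = f x := by simp [gAObjective, euclInner]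
  rw [hzero, gAObjective]
  linarith

end Euclidean

theorem stmt5 {d : ℕ} (σ : Matrix (Fin d) (Fin d) ℝ) (hσ : σ.PosDef)
    (A : ℝ) (hA : 0 < A) (L : ℝ) (f : (Fin d → ℝ) → ℝ)
    (hf : ∀ x y, |f x - f y| ≤ L * euclNorm (x - y)) :
    ∀ ε : ℝ, 0 < ε →
      ∃ ζ : (Fin d → ℝ) → (Fin d → ℝ), Measurable ζ ∧ (Set.range ζ).Finite ∧
        ∀ x : Fin d → ℝ,
          gA A σ f x < ε + f (x - ζ x)
            - euclInner (ζ x ᵥ* σ⁻¹) (ζ x) / (2 * Real.sqrt A) := by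
  intro ε hε
  obtain ⟨m, hm, hq⟩ := hσ.inv.exists_pos_mul_euclNorm_sq_le
  have hfu := uniformContinuous_of_abs_sub_le_mul_euclNorm hf
  have hfar : ∀ x, ∀ w ∉ {y | euclNorm y ≤ 2 * Real.sqrt A * L / m},
      gAObjective A σ f x w ≤ gAObjective A σ f x 0 := fun x w hw =>
    gAObjective_le_gAObjective_zero hf hq hA x (by linarith [(div_lt_iff₀ hm).mp (not_le.mp hw)])
  obtain ⟨ζ, hζ, hrange, hlt⟩ := exists_measurable_finite_range_forall_lt_add _
    (measurable_gAObjective hfu.continuous) (isCompact_setOf_euclNorm_le _)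
    (uniformEquicontinuousOn_gAObjective hfu (isCompact_setOf_euclNorm_le _)) hfar
    (half_pos hε)
  refine ⟨ζ, hζ, hrange, fun x => ?_⟩
  calc gA A σ f x ≤ gAObjective A σ f x (ζ x) + ε / 2 := by
        rw [gA_eq_iSup_gAObjective]
        exact ciSup_le fun w => (hlt x w).le
    _ < _ := by unfold gAObjective; linarith
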